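/- arXiv:2501.08656 — 3 statements merged into one kernel-verified Lean document; each statement's English description precedes it below -/
import Mathlib

section
/- Let (M,d) be a finite metric space with N+1 points. A basis (b_n)_{n=1}^N of F(M) is stochastic if and only if there exist nonzero reals (ρ_n)_{n=1}^N, an order F ∈ Σ(M), and reals λ_{n,i} ∈ [0,1] for 0 ≤ i < n ≤ N with Σ_{i=0}^{n-1} λ_{n,i} = 1 for every n, such that b_n = ρ_n( δ_{F(n)} − Σ_{i<n} λ_{n,i} δ_{F(i)} ) for n = 1,…,N. In that case, for every n, ‖b_n‖ = |ρ_n| Σ_{i<n} λ_{n,i} d(F(n),F(i)). -/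
open Finset

noncomputable section
open scoped Classical

namespace TCS

/-- The indicator function of a point. -/
def indic {V : Type*} [DecidableEq V] (x : V) : V → ℝ := fun z => if z = x then 1 else 0

/-- The molecule `δ_x - δ_y`. -/
def mol {V : Type*} [DecidableEq V] (x y : V) : V → ℝ := fun z => indic x z - indic y z

/-- `d` is a metric on `V`. -/
def IsMetric {V : Type*} (d : V → V → ℝ) : Prop :=
  (∀ x y, d x y = d y x) ∧ (∀ x y, d x y = 0 ↔ x = y) ∧ ∀ x y z, d x z ≤ d x y + d y z

/-- The transportation cost norm of `μ` (an element of the free space over `(V, d)`,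
i.e. a function with total sum zero), defined by duality with `Lip_0`. -/
def tcNorm {V : Type*} [Fintype V] (d : V → V → ℝ) (x0 : V) (μ : V → ℝ) : ℝ :=
  sSup {c : ℝ | ∃ f : V → ℝ, f x0 = 0 ∧ (∀ x y, |f x - f y| ≤ d x y) ∧ c = ∑ x, μ x * f x}

/-- `(b, bstar)` is a basis of the free space over `Fin (N+1)` (with basepoint `0`),
indexed by `n ≠ 0`, together with its coordinate functionals. -/
def IsFreeBasis (N : ℕ) (b : Fin (N+1) → Fin (N+1) → ℝ)
    (bstar : Fin (N+1) → (Fin (N+1) → ℝ) → ℝ) : Prop :=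
  (∀ n : Fin (N+1), n ≠ 0 → ∑ x, b n x = 0) ∧
  (∀ μ : Fin (N+1) → ℝ, (∑ x, μ x = 0) → ∀ z,
      μ z = ∑ n ∈ univ.filter (· ≠ (0 : Fin (N+1))), bstar n μ * b n z) ∧
  (∀ n m : Fin (N+1), n ≠ 0 → m ≠ 0 → bstar n (b m) = if n = m then 1 else 0) ∧
  (∀ n (c : ℝ) (μ ν : Fin (N+1) → ℝ), bstar n (c • μ + ν) = c * bstar n μ + bstar n ν)

/-- Every canonical projection of the (ordered) basis `(b, bstar)` is a stochastic
retraction. -/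
def IsStochProj (N : ℕ) (b : Fin (N+1) → Fin (N+1) → ℝ)
    (bstar : Fin (N+1) → (Fin (N+1) → ℝ) → ℝ) : Prop :=
  ∀ n : Fin (N+1),
    ∃ S : Finset (Fin (N+1)), (0 : Fin (N+1)) ∈ S ∧
      ∃ R : Fin (N+1) → Fin (N+1) → ℝ,
        (∀ x, (∀ z, 0 ≤ R x z) ∧ (∀ z, z ∉ S → R x z = 0) ∧ ∑ z, R x z = 1) ∧
        (∀ x ∈ S, R x = indic x) ∧
        (∀ μ : Fin (N+1) → ℝ, (∑ x, μ x = 0) → ∀ z,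
          (∑ i ∈ univ.filter (fun i => i ≠ (0 : Fin (N+1)) ∧ i ≤ n), bstar i μ * b i z)
            = ∑ x, μ x * R x z)

/-- The `ℓ₁`-distortion of the basis `(b, bstar)`. -/
def d1Basis {N : ℕ} (d : Fin (N+1) → Fin (N+1) → ℝ) (b : Fin (N+1) → Fin (N+1) → ℝ)
    (bstar : Fin (N+1) → (Fin (N+1) → ℝ) → ℝ) : ℝ :=
  sSup {c : ℝ | ∃ μ : Fin (N+1) → ℝ, (∑ x, μ x = 0) ∧ tcNorm d 0 μ = 1 ∧
    c = ∑ n ∈ univ.filter (· ≠ (0 : Fin (N+1))), |bstar n μ| * tcNorm d 0 (b n)}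

/-- The `ℓ₁ᴺ`-distortion of the metric space `(Fin (N+1), d)`. -/
def d1Space {N : ℕ} (d : Fin (N+1) → Fin (N+1) → ℝ) : ℝ :=
  sInf {c : ℝ | ∃ b bstar, IsFreeBasis N b bstar ∧ c = d1Basis d b bstar}

/-- The stochastic `ℓ₁ᴺ`-distortion of the metric space `(Fin (N+1), d)`. -/
def sd1Space {N : ℕ} (d : Fin (N+1) → Fin (N+1) → ℝ) : ℝ :=
  sInf {c : ℝ | ∃ b bstar, IsFreeBasis N b bstar ∧ IsStochProj N b bstar ∧
      c = d1Basis d b bstar}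

/-- The data `(λ_{n,i})` of a normalised stochastic basis. -/
def LamData (N : ℕ) (lam : Fin (N+1) → Fin (N+1) → ℝ) : Prop :=
  (∀ n i, 0 ≤ lam n i ∧ lam n i ≤ 1) ∧
  (∀ n i : Fin (N+1), ¬ i < n → lam n i = 0) ∧
  (∀ n : Fin (N+1), n ≠ 0 → ∑ i, lam n i = 1)

/-- The normalised stochastic basis with data `F`, `(λ_{n,i})`:
`b n = δ_{F n} - ∑_{i<n} λ_{n,i} δ_{F i}`. -/
def normBasisF {N : ℕ} (F : Equiv.Perm (Fin (N+1))) (lam : Fin (N+1) → Fin (N+1) → ℝ)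
    (n : Fin (N+1)) : Fin (N+1) → ℝ :=
  fun z => indic (F n) z - ∑ i, lam n i * indic (F i) z

/-- The normalised stochastic basis after identifying `M` with `{0, …, N}` via `F`. -/
def normBasis {N : ℕ} (lam : Fin (N+1) → Fin (N+1) → ℝ) : Fin (N+1) → Fin (N+1) → ℝ :=
  normBasisF (Equiv.refl _) lam

/-- `bstar` is the family of coordinate functionals of the normalised
stochastic basis with data `F`, `(λ_{n,i})`. -/
def IsCoordF {N : ℕ} (F : Equiv.Perm (Fin (N+1))) (lam : Fin (N+1) → Fin (N+1) → ℝ)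
    (bstar : Fin (N+1) → (Fin (N+1) → ℝ) → ℝ) : Prop :=
  ∀ μ : Fin (N+1) → ℝ, (∑ x, μ x = 0) → ∀ z,
    μ z = ∑ n ∈ univ.filter (· ≠ (0 : Fin (N+1))), bstar n μ * normBasisF F lam n z

/-- The auxiliary function `α(μ)` defined by downwards recursion:
`α(μ)(n) = μ n + ∑_{m > n} α(μ)(m) λ_{m,n}`. -/
def alpha {N : ℕ} (lam : Fin (N+1) → Fin (N+1) → ℝ) (μ : Fin (N+1) → ℝ)
    (n : Fin (N+1)) : ℝ :=
  μ n + ∑ m ∈ (Finset.univ.filter (fun m : Fin (N+1) => n < m)).attach,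
      alpha lam μ m.1 * lam m.1 n
termination_by (N + 1) - n.val
decreasing_by
  have hm := m.2
  simp only [Finset.mem_filter, Finset.mem_univ, true_and] at hm
  have h1 : n.val < m.1.val := hm
  have h2 := m.1.isLt
  omega

/-- Trees on `{0,…,N}` compatible with the order: given by a parent map with
`par n < n` for `n ≠ 0`. -/
def Tr (N : ℕ) : Type :=
  {par : Fin (N+1) → Fin (N+1) // par 0 = 0 ∧ ∀ n, n ≠ 0 → par n < n}

instance (N : ℕ) : Finite (Tr N) :=
  inferInstanceAs (Finite {par : Fin (N+1) → Fin (N+1) // par 0 = 0 ∧ ∀ n, n ≠ 0 → par n < n})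

noncomputable instance (N : ℕ) : Fintype (Tr N) := Fintype.ofFinite _

/-- `a` lies on the tree path from `x` to the root `0`. -/
def Anc {N : ℕ} (T : Tr N) (x a : Fin (N+1)) : Prop :=
  Relation.ReflTransGen (fun u v => v = T.1 u ∧ u ≠ 0) x a

/-- The meeting point `m_T(x,y)`: the minimal vertex of the tree path `[x,y]_T`,
equivalently the nearest common ancestor. -/
noncomputable def meet {N : ℕ} (T : Tr N) (x y : Fin (N+1)) : Fin (N+1) :=
  ((Finset.univ.filter (fun a => Anc T x a ∧ Anc T y a)).max).unbotD 0

/-- `p` is a probability distribution on `Tr N`. -/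
def IsProb {N : ℕ} (p : Tr N → ℝ) : Prop := (∀ T, 0 ≤ p T) ∧ ∑ T, p T = 1

/-- Probability of an event. -/
def probOf {N : ℕ} (p : Tr N → ℝ) (P : Tr N → Prop) : ℝ :=
  ∑ T ∈ Finset.univ.filter P, p T

/-- Expectation. -/
def expval {N : ℕ} (p : Tr N → ℝ) (f : Tr N → ℝ) : ℝ := ∑ T, p T * f T

/-- The geodesic distance `d_T(x,y)` of the weighted tree `T` (edge `{n, par n}`
carrying weight `d n (par n)`). -/
noncomputable def treeDist {N : ℕ} (d : Fin (N+1) → Fin (N+1) → ℝ) (T : Tr N)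
    (x y : Fin (N+1)) : ℝ :=
  ∑ s ∈ Finset.univ.filter (fun s =>
      (Anc T x s ∨ Anc T y s) ∧ Anc T s (meet T x y) ∧ s ≠ meet T x y),
    d s (T.1 s)

/-- `s` lies on the half-open segment `[z, m)_T`. -/
def onHalfSeg {N : ℕ} (T : Tr N) (z m s : Fin (N+1)) : Prop :=
  Anc T z s ∧ Anc T s m ∧ s ≠ m

/-- `p` is `(x,y)`-independent. -/
def XYIndep {N : ℕ} (p : Tr N → ℝ) (x y : Fin (N+1)) : Prop :=
  ∀ z : Fin (N+1), (z = x ∨ z = y) → ∀ s t : Fin (N+1), t < s →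
    probOf p (fun T => T.1 s = t ∧ onHalfSeg T z (meet T x y) s)
      = probOf p (fun T => T.1 s = t) * probOf p (fun T => onHalfSeg T z (meet T x y) s)

/-- `p0` and `p` are compatible: every vertex pair has the same probability of
being an edge of the random tree. -/
def Compat {N : ℕ} (p0 p : Tr N → ℝ) : Prop :=
  ∀ s t : Fin (N+1), t < s →
    probOf p0 (fun T => T.1 s = t) = probOf p (fun T => T.1 s = t)

/-- The product probability `π_{(b_n)}` determined by the data `(λ_{n,i})`. -/
def prodProb {N : ℕ} (lam : Fin (N+1) → Fin (N+1) → ℝ) (T : Tr N) : ℝ :=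
  ∏ n ∈ Finset.univ.filter (fun n : Fin (N+1) => n ≠ 0), lam n (T.1 n)

/-- The (strictly decreasing) chain with vertex set `S` is a subgraph of `T`:
consecutive elements of `S` are linked by the parent map. -/
def chainInTree {N : ℕ} (S : Finset (Fin (N+1))) (T : Tr N) : Prop :=
  ∀ a ∈ S, (∃ c ∈ S, c < a) → T.1 a ∈ S ∧ ∀ c ∈ S, c < a → c ≤ T.1 a

end TCS


/-!
Let `R_n` be the stochastic retraction onto `S_n ∋ 0` realising the canonical projection `P_n`.
Since `P_n - P_{n-1} = b_n^* ⊗ b_n`, the kernels satisfy `R_n - R_{n-1} = c ⊗ b_n` with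
`⟨c, b_n⟩ = 1`. Taking traces gives `|S_n| = |S_{n-1}| + 1`, and a positivity argument gives
`S_{n-1} ⊆ S_n`; as `S_0 = {0}`, each `S_n` adds exactly one point `F(n)` to `S_{n-1}`.
Evaluating the rank-one identity at `x = F(n)`, which `R_n` fixes, yields
`b_n = ρ_n (δ_{F(n)} - R_{n-1}(F(n)))`, so `λ_{n,i}` is the mass that `R_{n-1}(F(n))` gives to
`F(i)`. Conversely, for a basis of this form `P_n` is realised by the random walk that jumps
from `F(m)` to `F(i)` with probability `λ_{m,i}` and stops on entering `F{0, …, n}`.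

Pairing `ρ (δ_a - ∑ w_i δ_{q_i})` with a 1-Lipschitz `f` gives `ρ ∑ w_i (f a - f q_i)`, which is
at most `|ρ| ∑ w_i d(a, q_i)`, with equality for `f = ∓ d(a, ·)` up to a constant.
-/

namespace TCS

lemma isLinearMap_of_smul_add {E : Type*} [AddCommGroup E] [Module ℝ E] {f : E → ℝ}
    (h : ∀ (c : ℝ) (μ ν : E), f (c • μ + ν) = c * f μ + f ν) : IsLinearMap ℝ f := by
  have h0 : f 0 = 0 := by simpa using h 1 0 0
  exact ⟨fun μ ν => by simpa using h 1 μ ν, fun c μ => by simpa [h0] using h c μ 0⟩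

lemma indic_symm_apply {V : Type*} [DecidableEq V] (e : V ≃ V) (m z : V) :
    indic m (e.symm z) = indic (e m) z := by
  simp [indic, Equiv.symm_apply_eq]

section Molecules

variable {V : Type*} [Fintype V] [DecidableEq V]

lemma sum_indic_mul (a : V) (f : V → ℝ) : ∑ x, indic a x * f x = f a := by
  simp [indic]

lemma sum_mul_indic (f : V → ℝ) (z : V) : ∑ x, f x * indic x z = f z := by
  simp [indic]

lemma sum_mol (x y : V) : ∑ z, mol x y z = 0 := by
  simp [mol, indic]

lemma sum_mol_mul (x y : V) (f : V → ℝ) : ∑ w, mol x y w * f w = f x - f y := by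
  simp only [mol, sub_mul, sum_sub_distrib, sum_indic_mul]

lemma sum_smul_mol {μ : V → ℝ} (hμ : ∑ x, μ x = 0) (x0 : V) : ∑ x, μ x • mol x x0 = μ := by
  funext z
  simp only [Finset.sum_apply, Pi.smul_apply, smul_eq_mul, mol, mul_sub, sum_sub_distrib,
    ← sum_mul, hμ, zero_mul, sub_zero]
  simp [indic]

lemma sum_molecule_mul {ι : Type*} [Fintype ι] (ρ : ℝ) (a : V) (q : ι → V) (w : ι → ℝ)
    (f : V → ℝ) :
    ∑ x, ρ * (indic a x - ∑ i, w i * indic (q i) x) * f x = ρ * (f a - ∑ i, w i * f (q i)) := by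
  simp only [mul_assoc, ← mul_sum, sub_mul, sum_sub_distrib, sum_mul,
    sum_indic_mul]
  rw [sum_comm]
  simp only [← mul_sum, sum_indic_mul]

theorem tcNorm_molecule {ι : Type*} [Fintype ι] {d : V → V → ℝ} (hd : IsMetric d) (x0 : V)
    (ρ : ℝ) (a : V) (q : ι → V) {w : ι → ℝ} (hw0 : ∀ i, 0 ≤ w i) (hw1 : ∑ i, w i = 1) :
    tcNorm d x0 (fun z => ρ * (indic a z - ∑ i, w i * indic (q i) z))
      = |ρ| * ∑ i, w i * d a (q i) := by
  obtain ⟨hsymm, hzero, htri⟩ := hd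
  have hpair : ∀ f : V → ℝ, ∑ x, ρ * (indic a x - ∑ i, w i * indic (q i) x) * f x
      = ρ * ∑ i, w i * (f a - f (q i)) := by
    intro f
    rw [sum_molecule_mul]
    simp only [mul_sub, sum_sub_distrib, ← sum_mul, hw1, one_mul]
  refine IsGreatest.csSup_eq ⟨?_, ?_⟩
  · obtain ⟨s, hs, hρs⟩ : ∃ s : ℝ, |s| = 1 ∧ ρ * s = |ρ| := by
      rcases le_or_gt 0 ρ with h | h
      · exact ⟨1, by simp, by simp [abs_of_nonneg h]⟩
      · exact ⟨-1, by simp, by simp [abs_of_neg h]⟩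
    refine ⟨fun x => s * (d a x0 - d a x), by simp, fun x y => ?_, ?_⟩
    · rw [← mul_sub, abs_mul, hs, one_mul, abs_le]
      constructor <;> linarith [hsymm x y, htri a x y, htri a y x]
    · simp only [hpair, (hzero a a).2 rfl]
      rw [← hρs, mul_assoc, mul_sum]
      congr 1
      exact sum_congr rfl fun i _ => by ring
  · rintro c ⟨f, -, hf, rfl⟩
    rw [hpair]
    calc ρ * ∑ i, w i * (f a - f (q i))
        ≤ |ρ| * |∑ i, w i * (f a - f (q i))| := by rw [← abs_mul]; exact le_abs_self _
      _ ≤ |ρ| * ∑ i, w i * d a (q i) := by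
        gcongr
        refine (abs_sum_le_sum_abs _ _).trans (sum_le_sum fun i _ => ?_)
        rw [abs_mul, abs_of_nonneg (hw0 i)]
        exact mul_le_mul_of_nonneg_left (hf _ _) (hw0 i)

lemma apply_eq_sum_mul_mol {f : (V → ℝ) → ℝ} (hf : IsLinearMap ℝ f) {μ : V → ℝ}
    (hμ : ∑ x, μ x = 0) (x0 : V) : f μ = ∑ x, μ x * f (mol x x0) := by
  have := map_sum (IsLinearMap.mk' f hf) (fun x => μ x • mol x x0) univ
  simpa [sum_smul_mol hμ] using this

end Molecules

section Retractions

variable {V : Type*} [Fintype V] [DecidableEq V]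

def IsStochRetraction (S : Finset V) (R : V → V → ℝ) : Prop :=
  (∀ x, (∀ z, 0 ≤ R x z) ∧ (∀ z, z ∉ S → R x z = 0) ∧ ∑ z, R x z = 1) ∧
    ∀ x ∈ S, R x = indic x

namespace IsStochRetraction

variable {S S' : Finset V} {R R' : V → V → ℝ}

lemma le_one (hR : IsStochRetraction S R) (x z : V) : R x z ≤ 1 :=
  ((hR.1 x).2.2) ▸ single_le_sum (fun y _ => (hR.1 x).1 y) (mem_univ z)

lemma sum_diag (hR : IsStochRetraction S R) : ∑ z, R z z = S.card := by
  have hdiag : ∀ z, R z z = if z ∈ S then 1 else 0 := by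
    intro z
    split_ifs with hz
    · simp [hR.2 z hz, indic]
    · exact (hR.1 z).2.1 z hz
  simp [hdiag]

lemma comp_equiv (hR : IsStochRetraction S R) (e : V ≃ V) :
    IsStochRetraction (S.map e.toEmbedding) (fun x z => R (e.symm x) (e.symm z)) := by
  refine ⟨fun x => ⟨fun z => (hR.1 _).1 _, fun z hz => (hR.1 _).2.1 _ ?_, ?_⟩, fun x hx => ?_⟩
  · rwa [← mem_map_equiv]
  · exact (e.symm.sum_comp (R (e.symm x))).trans (hR.1 _).2.2
  · funext z
    change R (e.symm x) (e.symm z) = indic x z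
    rw [hR.2 _ (mem_map_equiv.1 hx), indic_symm_apply, Equiv.apply_symm_apply]

variable {c β : V → ℝ}

lemma subset_of_sub_eq_mul (hR : IsStochRetraction S R) (hR' : IsStochRetraction S' R')
    (hdiff : ∀ x z, R x z - R' x z = c x * β z) (hone : ∑ x, c x * β x = 1) : S' ⊆ S := by
  intro z hz'
  by_contra hz
  have hRz : ∀ x, R x z = 0 := fun x => (hR.1 x).2.1 z hz
  have hR'z : R' z = indic z := hR'.2 z hz'
  have hR'zz : R' z z = 1 := by simp [hR'z, indic]
  have hczβz : c z * β z = -1 := by rw [← hdiff, hRz, hR'zz]; ring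
  have hc : ∀ x, c x = c z * R' x z := fun x => by
    have h := hdiff x z
    rw [hRz] at h
    linear_combination c x * hczβz + c z * h
  have hβ : ∀ x, c z * β x = R z x - indic z x := fun x => by rw [← hdiff, hR'z]
  -- `∑ₓ R z x R' x z` is then `⟨c, β⟩ + R' z z = 2`, but it is an average of numbers `≤ 1`
  have htwo : ∑ x, R z x * R' x z = 2 := by
    have hterm : ∀ x, R z x * R' x z = c x * β x + indic z x * R' x z := fun x => by
      rw [hc x]; linear_combination -R' x z * hβ x
    simp only [hterm, sum_add_distrib, hone, sum_indic_mul, hR'zz]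
    norm_num
  have hle : ∑ x, R z x * R' x z ≤ 1 :=
    calc ∑ x, R z x * R' x z ≤ ∑ x, R z x * 1 :=
          sum_le_sum fun x _ => mul_le_mul_of_nonneg_left (hR'.le_one x z) ((hR.1 z).1 x)
      _ = 1 := by simp [(hR.1 z).2.2]
  linarith

lemma exists_insert_eq_of_sub_eq_mul (hR : IsStochRetraction S R)
    (hR' : IsStochRetraction S' R') (hdiff : ∀ x z, R x z - R' x z = c x * β z)
    (hone : ∑ x, c x * β x = 1) : ∃ y ∉ S', insert y S' = S := by
  refine exists_eq_insert_iff.2 ⟨hR.subset_of_sub_eq_mul hR' hdiff hone, ?_⟩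
  have htrace : (S.card : ℝ) - S'.card = 1 := by
    rw [← hR.sum_diag, ← hR'.sum_diag, ← sum_sub_distrib, ← hone]
    exact sum_congr rfl fun x _ => hdiff x x
  exact_mod_cast (by linarith : (S'.card : ℝ) + 1 = S.card)

lemma eq_inv_mul_of_sub_eq_mul (hR : IsStochRetraction S R) (hR' : IsStochRetraction S' R')
    (hdiff : ∀ x z, R x z - R' x z = c x * β z) {y : V} (hy : y ∈ S) (hy' : y ∉ S') :
    c y ≠ 0 ∧ ∀ z, β z = (c y)⁻¹ * (indic y z - R' y z) := by
  have hβ : ∀ z, c y * β z = indic y z - R' y z := fun z => by rw [← hdiff, hR.2 y hy]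
  have hcy : c y ≠ 0 := by
    intro h
    simpa [h, indic, (hR'.1 y).2.1 y hy'] using hβ y
  exact ⟨hcy, fun z => by rw [← hβ, inv_mul_cancel_left₀ hcy]⟩

end IsStochRetraction

end Retractions

section Chains

variable {α : Type*} [DecidableEq α] {N : ℕ} {S : Fin (N+1) → Finset α} {g : Fin (N+1) → α}

lemma _root_.Fin.Iic_succ (j : Fin N) : Iic j.succ = insert j.succ (Iic j.castSucc) := by
  ext i
  rw [mem_insert, mem_Iic, mem_Iic, Fin.le_castSucc_iff, le_iff_lt_or_eq, or_comm]

lemma eq_image_Iic_of_insert (h0 : S 0 = {g 0})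
    (hstep : ∀ j : Fin N, insert (g j.succ) (S j.castSucc) = S j.succ) (n : Fin (N+1)) :
    S n = (Iic n).image g := by
  induction n using Fin.induction with
  | zero => rw [h0, show Iic (0 : Fin (N+1)) = {0} from Iic_bot, image_singleton]
  | succ j ih => rw [← hstep, ih, Fin.Iic_succ, image_insert]

lemma injective_of_insert (hS : ∀ n, S n = (Iic n).image g)
    (hnew : ∀ j : Fin N, g j.succ ∉ S j.castSucc) : Function.Injective g := by
  suffices h : ∀ i k, i < k → g i ≠ g k by
    intro i k hik
    by_contra hne
    rcases lt_or_gt_of_ne hne with hlt | hlt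
    exacts [h i k hlt hik, h k i hlt hik.symm]
  intro i k hik hgik
  obtain ⟨j, rfl⟩ := Fin.exists_succ_eq.2 (Fin.ne_zero_of_lt hik)
  exact hnew j (hS _ ▸ hgik ▸ mem_image_of_mem g (mem_Iic.2 (Fin.le_castSucc_iff.2 hik)))

end Chains

section Forward

variable {N : ℕ} {b : Fin (N+1) → Fin (N+1) → ℝ}

theorem exists_form_of_rankOne_chain {S : Fin (N+1) → Finset (Fin (N+1))}
    {R : Fin (N+1) → Fin (N+1) → Fin (N+1) → ℝ} {c : Fin N → Fin (N+1) → ℝ}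
    (hR : ∀ n, IsStochRetraction (S n) (R n)) (hS_zero : S 0 = {0})
    (hdiff : ∀ j x z, R j.succ x z - R j.castSucc x z = c j x * b j.succ z)
    (hone : ∀ j, ∑ x, c j x * b j.succ x = 1) :
    ∃ (ρ : Fin (N+1) → ℝ) (F : Equiv.Perm (Fin (N+1))) (lam : Fin (N+1) → Fin (N+1) → ℝ),
      F 0 = 0 ∧ (∀ n : Fin (N+1), n ≠ 0 → ρ n ≠ 0) ∧ LamData N lam ∧
      ∀ n : Fin (N+1), n ≠ 0 →
        b n = fun z => ρ n * (indic (F n) z - ∑ i, lam n i * indic (F i) z) := by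
  choose y hyS hins using fun j =>
    (hR j.succ).exists_insert_eq_of_sub_eq_mul (hR j.castSucc) (hdiff j) (hone j)
  have hshape j := (hR j.succ).eq_inv_mul_of_sub_eq_mul (hR j.castSucc) (hdiff j)
    (hins j ▸ mem_insert_self _ _) (hyS j)
  set g : Fin (N+1) → Fin (N+1) := Fin.cases 0 y
  have hSg : ∀ n, S n = (Iic n).image g := eq_image_Iic_of_insert hS_zero hins
  let F := Equiv.ofBijective g (Finite.injective_iff_bijective.1 (injective_of_insert hSg hyS))
  have hF_notMem : ∀ (j : Fin N) i, ¬ i < j.succ → F i ∉ S j.castSucc := by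
    intro j i hi hmem
    obtain ⟨k, hk, hgk⟩ := mem_image.1 (hSg _ ▸ hmem)
    exact hi (F.injective hgk ▸ Fin.le_castSucc_iff.1 (mem_Iic.1 hk))
  refine ⟨Fin.cases 1 fun j => (c j (y j))⁻¹, F,
    fun n i => Fin.cases 0 (fun j => R j.castSucc (y j) (F i)) n, rfl, ?_, ⟨?_, ?_, ?_⟩, ?_⟩
  · intro n hn
    cases n using Fin.cases with
    | zero => exact absurd rfl hn
    | succ j => simpa using (hshape j).1
  · intro n i
    cases n using Fin.cases with
    | zero => simp
    | succ j => exact ⟨((hR _).1 _).1 _, (hR _).le_one _ _⟩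
  · intro n i hi
    cases n using Fin.cases with
    | zero => rfl
    | succ j => exact ((hR _).1 _).2.1 _ (hF_notMem j i hi)
  · intro n hn
    cases n using Fin.cases with
    | zero => exact absurd rfl hn
    | succ j => exact (F.sum_comp (R j.castSucc (y j))).trans ((hR _).1 _).2.2
  · intro n hn
    cases n using Fin.cases with
    | zero => exact absurd rfl hn
    | succ j =>
      funext z
      simp only [Fin.cases_succ]
      rw [(hshape j).2 z, F.sum_comp (fun w => R j.castSucc (y j) w * indic w z), sum_mul_indic]
      rfl

lemma filter_ne_zero_le_succ (j : Fin N) :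
    univ.filter (fun i : Fin (N+1) => i ≠ 0 ∧ i ≤ j.succ)
      = insert j.succ (univ.filter fun i : Fin (N+1) => i ≠ 0 ∧ i ≤ j.castSucc) := by
  ext i
  simp only [mem_filter, mem_univ, true_and, mem_insert, Fin.le_castSucc_iff]
  constructor
  · rintro ⟨hi, hij⟩
    exact (eq_or_lt_of_le hij).imp id (And.intro hi)
  · rintro (rfl | ⟨hi, hij⟩)
    exacts [⟨Fin.succ_ne_zero j, le_rfl⟩, ⟨hi, hij.le⟩]

theorem exists_form_of_isStochProj {bstar : Fin (N+1) → (Fin (N+1) → ℝ) → ℝ}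
    (hbasis : IsFreeBasis N b bstar) (hsp : IsStochProj N b bstar) :
    ∃ (ρ : Fin (N+1) → ℝ) (F : Equiv.Perm (Fin (N+1))) (lam : Fin (N+1) → Fin (N+1) → ℝ),
      F 0 = 0 ∧ (∀ n : Fin (N+1), n ≠ 0 → ρ n ≠ 0) ∧ LamData N lam ∧
      ∀ n : Fin (N+1), n ≠ 0 →
        b n = fun z => ρ n * (indic (F n) z - ∑ i, lam n i * indic (F i) z) := by
  obtain ⟨hsum, -, hdual, hlin⟩ := hbasis
  choose S hS0 R hRstoch hRfix hproj using hsp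
  have hR : ∀ n, IsStochRetraction (S n) (R n) := fun n => ⟨hRstoch n, hRfix n⟩
  have hPmol : ∀ n x z, ∑ i ∈ univ.filter (fun i => i ≠ 0 ∧ i ≤ n), bstar i (mol x 0) * b i z
      = R n x z - indic 0 z := by
    intro n x z
    rw [hproj n _ (sum_mol x 0), sum_mol_mul, (hR n).2 0 (hS0 n)]
  have hS_zero : S 0 = {0} := by
    refine eq_singleton_iff_unique_mem.2 ⟨hS0 0, fun s hs => ?_⟩
    have h := hPmol 0 s s
    by_contra hs0
    simp [(hR 0).2 s hs, indic, hs0] at h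
  refine exists_form_of_rankOne_chain hR hS_zero (c := fun j x => bstar j.succ (mol x 0))
    (fun j x z => ?_) (fun j => ?_)
  · have h := hPmol j.succ x z
    rw [filter_ne_zero_le_succ, sum_insert (by simp), hPmol] at h
    linarith
  · have h := hdual j.succ j.succ (Fin.succ_ne_zero j) (Fin.succ_ne_zero j)
    rw [if_pos rfl, apply_eq_sum_mul_mol (isLinearMap_of_smul_add (hlin j.succ))
      (hsum _ (Fin.succ_ne_zero j)) 0] at h
    simpa only [mul_comm] using h

end Forward

section Backward

variable {N : ℕ}

/-- `absorb lam n m` is the law of the walk started at `m` that steps from `k` to `i` with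
probability `lam k i`, stopped on entering `{0, …, n}`. -/
def absorb (lam : Fin (N+1) → Fin (N+1) → ℝ) (n m z : Fin (N+1)) : ℝ :=
  if m ≤ n then indic m z else ∑ i : {i // i < m}, lam m i * absorb lam n i z
termination_by m

variable {lam : Fin (N+1) → Fin (N+1) → ℝ}

lemma absorb_of_le {n m : Fin (N+1)} (h : m ≤ n) : absorb lam n m = indic m := by
  funext z
  rw [absorb, if_pos h]

lemma absorb_of_lt (hlam : LamData N lam) {n m : Fin (N+1)} (h : n < m) (z : Fin (N+1)) :
    absorb lam n m z = ∑ i, lam m i * absorb lam n i z := by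
  rw [absorb, if_neg h.not_ge,
    ← sum_subtype (univ.filter (· < m)) (fun i => by simp) (fun i => lam m i * absorb lam n i z),
    sum_filter]
  refine sum_congr rfl fun i _ => ?_
  split_ifs with hi
  · rfl
  · rw [hlam.2.1 m i hi, zero_mul]

lemma isStochRetraction_absorb (hlam : LamData N lam) (n : Fin (N+1)) :
    IsStochRetraction (Iic n) (absorb lam n) := by
  refine ⟨fun m => ?_, fun m hm => absorb_of_le (mem_Iic.1 hm)⟩
  induction m using WellFoundedLT.induction with
  | _ m ih =>
  rcases le_or_gt m n with hmn | hnm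
  · rw [absorb_of_le hmn]
    refine ⟨fun z => ?_, fun z hz => ?_, by simp [indic]⟩
    · unfold indic; split_ifs <;> norm_num
    · have hzm : z ≠ m := fun h => hz (mem_Iic.2 (h ▸ hmn))
      simp [indic, hzm]
  have hlam_or : ∀ i, lam m i = 0 ∨ i < m := fun i => (em (i < m)).symm.imp_left (hlam.2.1 m i)
  simp only [absorb_of_lt hlam hnm]
  refine ⟨fun z => sum_nonneg fun i _ => ?_, fun z hz => sum_eq_zero fun i _ => ?_, ?_⟩
  · rcases hlam_or i with h | h
    · simp [h]
    · exact mul_nonneg (hlam.1 m i).1 ((ih i h).1 z)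
  · rcases hlam_or i with h | h
    · simp [h]
    · rw [(ih i h).2.1 z hz, mul_zero]
  · rw [sum_comm, ← hlam.2.2 m (Fin.ne_zero_of_lt hnm)]
    refine sum_congr rfl fun i _ => ?_
    rcases hlam_or i with h | h
    · simp [h]
    · rw [← mul_sum, (ih i h).2.2, mul_one]

lemma absorb_sub_sum_mul (hlam : LamData N lam) (n m z : Fin (N+1)) :
    absorb lam n m z - ∑ i, lam m i * absorb lam n i z
      = if m ≤ n then indic m z - ∑ i, lam m i * indic i z else 0 := by
  split_ifs with hmn
  · rw [absorb_of_le hmn]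
    congr 1
    refine sum_congr rfl fun i _ => ?_
    by_cases hi : i < m
    · rw [absorb_of_le (hi.le.trans hmn)]
    · rw [hlam.2.1 m i hi, zero_mul, zero_mul]
  · rw [absorb_of_lt hlam (not_le.1 hmn), sub_self]

lemma sum_proj_eq_sum_mul_of_basis {b : Fin (N+1) → Fin (N+1) → ℝ}
    {bstar : Fin (N+1) → (Fin (N+1) → ℝ) → ℝ}
    (hrepr : ∀ μ : Fin (N+1) → ℝ, (∑ x, μ x = 0) → ∀ z,
      μ z = ∑ n ∈ univ.filter (· ≠ (0 : Fin (N+1))), bstar n μ * b n z)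
    {R : Fin (N+1) → Fin (N+1) → ℝ} (n : Fin (N+1))
    (hR : ∀ m, m ≠ 0 → ∀ z, ∑ x, b m x * R x z = if m ≤ n then b m z else 0)
    {μ : Fin (N+1) → ℝ} (hμ : ∑ x, μ x = 0) (z : Fin (N+1)) :
    ∑ i ∈ univ.filter (fun i => i ≠ (0 : Fin (N+1)) ∧ i ≤ n), bstar i μ * b i z
      = ∑ x, μ x * R x z :=
  calc _ = ∑ m ∈ univ.filter (· ≠ (0 : Fin (N+1))), bstar m μ * ∑ x, b m x * R x z := by
        rw [← filter_filter, sum_filter]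
        refine sum_congr rfl fun m hm => ?_
        rw [hR m (mem_filter.1 hm).2]
        split_ifs <;> simp
    _ = ∑ x, μ x * R x z := by
        simp only [mul_sum]
        rw [sum_comm]
        refine sum_congr rfl fun x _ => ?_
        rw [hrepr μ hμ x, sum_mul]
        exact sum_congr rfl fun m _ => by ring

theorem isStochProj_of_form {b : Fin (N+1) → Fin (N+1) → ℝ}
    {bstar : Fin (N+1) → (Fin (N+1) → ℝ) → ℝ} (hbasis : IsFreeBasis N b bstar)
    {ρ : Fin (N+1) → ℝ} {F : Equiv.Perm (Fin (N+1))} (hF0 : F 0 = 0) (hlam : LamData N lam)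
    (hform : ∀ n : Fin (N+1), n ≠ 0 →
      b n = fun z => ρ n * (indic (F n) z - ∑ i, lam n i * indic (F i) z)) :
    IsStochProj N b bstar := by
  intro n
  obtain ⟨hRstoch, hRfix⟩ := (isStochRetraction_absorb hlam n).comp_equiv F
  refine ⟨(Iic n).map F.toEmbedding, mem_map_equiv.2 ?_, _, hRstoch, hRfix,
    fun μ hμ z => sum_proj_eq_sum_mul_of_basis hbasis.2.1 n
      (R := fun x z => absorb lam n (F.symm x) (F.symm z)) (fun m hm z => ?_) hμ z⟩
  · rw [F.symm_apply_eq.2 hF0.symm]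
    exact mem_Iic.2 (Fin.zero_le n)
  · rw [hform m hm, sum_molecule_mul]
    simp only [Equiv.symm_apply_apply]
    rw [absorb_sub_sum_mul hlam]
    split_ifs
    · simp only [indic_symm_apply]
    · rw [mul_zero]

end Backward

theorem statement2 (N : ℕ) (d : Fin (N+1) → Fin (N+1) → ℝ) (hd : IsMetric d)
    (b : Fin (N+1) → Fin (N+1) → ℝ) (bstar : Fin (N+1) → (Fin (N+1) → ℝ) → ℝ)
    (hbasis : IsFreeBasis N b bstar) :
    (IsStochProj N b bstar ↔
      ∃ (ρ : Fin (N+1) → ℝ) (F : Equiv.Perm (Fin (N+1)))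
        (lam : Fin (N+1) → Fin (N+1) → ℝ),
        F 0 = 0 ∧ (∀ n : Fin (N+1), n ≠ 0 → ρ n ≠ 0) ∧ LamData N lam ∧
        ∀ n : Fin (N+1), n ≠ 0 →
          b n = fun z => ρ n * (indic (F n) z - ∑ i, lam n i * indic (F i) z)) ∧
    (∀ (ρ : Fin (N+1) → ℝ) (F : Equiv.Perm (Fin (N+1)))
        (lam : Fin (N+1) → Fin (N+1) → ℝ),
        F 0 = 0 → (∀ n : Fin (N+1), n ≠ 0 → ρ n ≠ 0) → LamData N lam →
        (∀ n : Fin (N+1), n ≠ 0 →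
          b n = fun z => ρ n * (indic (F n) z - ∑ i, lam n i * indic (F i) z)) →
        ∀ n : Fin (N+1), n ≠ 0 →
          tcNorm d 0 (b n) = |ρ n| * ∑ i, lam n i * d (F n) (F i)) := by
  refine ⟨⟨exists_form_of_isStochProj hbasis,
    fun ⟨_, _, _, hF0, _, hlam, hform⟩ => isStochProj_of_form hbasis hF0 hlam hform⟩, ?_⟩
  intro ρ F lam _ _ hlam hform n hn
  rw [hform n hn]
  exact tcNorm_molecule hd 0 (ρ n) (F n) F (fun i => (hlam.1 n i).1) (hlam.2.2 n hn)

end TCS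
end
end

section
/- Let (M,d) be a finite metric space with N+1 points and let (b_n) ∈ B(M) have data F ∈ Σ(M) and (λ_{n,i}). Then the product probability π_{(b_n)} is a probability distribution on T(F). Moreover: (i) for every subgraph S of some tree in T(F), Σ_{T∈T(F), S⊆T} Π_{e∈E(T)∖E(S)} λ_e = 1, and consequently π_{(b_n)}(T : S ⊆ T) = Π_{e∈E(S)} λ_e; (ii) for all 1 ≤ z, n ≤ N (identifying M with {0,…,N} via F), b*_n(δ_z) = Σ_{C ∈ →[z,n]} π_{(b_n)}(T : C ⊆ T). -/
open Finset

noncomputable section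
open scoped Classical

/-!
A tree compatible with the order is the same thing as a choice of parent `par n < n` for every
`n ≠ 0`, and `π` makes these choices independently, `par n` having law `λ_{n,·}`. Hence sums over
trees of products over vertices factor into products of sums over parents; prescribing the
edges of `S` replaces the law of `par n` by a point mass for `n` in the domain of `S`, which
gives (i).

For (ii), the coefficients of `δ_z` satisfy the downward recursion
`b*_w(δ_z) = [w = z] + ∑_{m > w} b*_m(δ_z) λ_{m,w}`. Splitting a chain from `w` up to `z` at its
second lowest vertex `m` shows that the total weight `∑_C ∏_{e ∈ C} λ_e` of these chains obeys
the same recursion, and by (i) the weight of a chain is the probability that the random tree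
contains it.
-/

namespace TCS

section Chains

variable {α : Type*} [LinearOrder α]

def chainEdges (S : Finset α) : Finset (α × α) :=
  (S ×ˢ S).filter (fun q => q.2 < q.1 ∧ ∀ c ∈ S, c < q.1 → c ≤ q.2)

lemma mem_chainEdges {S : Finset α} {q : α × α} :
    q ∈ chainEdges S ↔ q.1 ∈ S ∧ q.2 ∈ S ∧ q.2 < q.1 ∧ ∀ c ∈ S, c < q.1 → c ≤ q.2 := by
  simp [chainEdges, and_assoc]

lemma lt_of_mem_chainEdges {S : Finset α} {q : α × α} (hq : q ∈ chainEdges S) : q.2 < q.1 :=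
  (mem_chainEdges.1 hq).2.2.1

lemma snd_eq_of_mem_chainEdges {S : Finset α} {q q' : α × α} (hq : q ∈ chainEdges S)
    (hq' : q' ∈ chainEdges S) (h : q.1 = q'.1) : q.2 = q'.2 :=
  le_antisymm
    ((mem_chainEdges.1 hq').2.2.2 _ (mem_chainEdges.1 hq).2.1 (h ▸ lt_of_mem_chainEdges hq))
    ((mem_chainEdges.1 hq).2.2.2 _ (mem_chainEdges.1 hq').2.1 (h ▸ lt_of_mem_chainEdges hq'))

lemma chainEdges_singleton (a : α) : chainEdges {a} = ∅ := by
  ext q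
  simp only [mem_chainEdges, Finset.mem_singleton, Finset.notMem_empty, iff_false]
  rintro ⟨h1, h2, hlt, -⟩
  exact hlt.ne (h2.trans h1.symm)

lemma chainEdges_insert_of_lt_min {S : Finset α} {m w : α} (hm : m ∈ S)
    (hmin : ∀ a ∈ S, m ≤ a) (hwm : w < m) :
    chainEdges (insert w S) = insert (m, w) (chainEdges S) := by
  ext ⟨a, b⟩
  simp only [mem_chainEdges, Finset.mem_insert, Prod.mk.injEq, forall_eq_or_imp]
  constructor
  · rintro ⟨ha | ha, hb | hb, hba, -, hc⟩
    · exact absurd hba (by rw [ha, hb]; exact lt_irrefl w)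
    · exact absurd hba (not_lt.2 ((ha ▸ hwm.le).trans (hmin b hb)))
    · refine Or.inl ⟨le_antisymm (not_lt.1 fun hma => ?_) (hmin a ha), hb⟩
      exact absurd (hc m hm hma) (not_le.2 (hb ▸ hwm))
    · exact Or.inr ⟨ha, hb, hba, hc⟩
  · rintro (⟨rfl, rfl⟩ | ⟨ha, hb, hba, hc⟩)
    · exact ⟨Or.inr hm, Or.inl rfl, hwm, fun _ => le_rfl,
        fun c hc hcm => absurd (hmin c hc) (not_le.2 hcm)⟩
    · exact ⟨Or.inr ha, Or.inr hb, hba, fun _ => (hwm.trans_le (hmin b hb)).le, hc⟩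

variable [Fintype α]

def chainsBetween (n z : α) : Finset (Finset α) :=
  univ.filter (fun S : Finset α => z ∈ S ∧ n ∈ S ∧ ∀ a ∈ S, n ≤ a ∧ a ≤ z)

lemma mem_chainsBetween {n z : α} {S : Finset α} :
    S ∈ chainsBetween n z ↔ z ∈ S ∧ n ∈ S ∧ ∀ a ∈ S, n ≤ a ∧ a ≤ z := by
  simp [chainsBetween]

lemma chainsBetween_of_lt {n z : α} (h : z < n) : chainsBetween n z = ∅ :=
  Finset.eq_empty_of_forall_notMem fun _ hS =>
    let ⟨_, hn, hall⟩ := mem_chainsBetween.1 hS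
    absurd (hall n hn).2 (not_le.2 h)

lemma chainsBetween_self (z : α) : chainsBetween z z = {{z}} := by
  ext S
  simp only [mem_chainsBetween, Finset.mem_singleton]
  constructor
  · rintro ⟨hz, -, hall⟩
    exact Finset.eq_singleton_iff_unique_mem.2
      ⟨hz, fun a ha => le_antisymm (hall a ha).2 (hall a ha).1⟩
  · rintro rfl
    simp

lemma sum_chainsBetween_eq_sum_insert {n z : α} (hnz : n < z) (f : Finset α → ℝ) :
    ∑ S ∈ chainsBetween n z, f S
      = ∑ m ∈ univ.filter (fun m => n < m), ∑ S ∈ chainsBetween m z, f (insert n S) := by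
  have hne {S : Finset α} (hS : S ∈ chainsBetween n z) : (S.erase n).Nonempty :=
    ⟨z, Finset.mem_erase.2 ⟨hnz.ne', (mem_chainsBetween.1 hS).1⟩⟩
  rw [Finset.sum_sigma']
  symm
  refine Finset.sum_bij' (fun x _ => insert n x.2)
    (fun S hS => ⟨(S.erase n).min' (hne hS), S.erase n⟩) ?_ ?_ ?_ ?_ (fun _ _ => rfl)
  · rintro ⟨m, S⟩ hx
    simp only [Finset.mem_sigma, Finset.mem_filter, Finset.mem_univ, true_and,
      mem_chainsBetween] at hx ⊢
    obtain ⟨hnm, hz, -, hall⟩ := hx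
    refine ⟨Finset.mem_insert_of_mem hz, Finset.mem_insert_self n S, ?_⟩
    simp only [Finset.mem_insert, forall_eq_or_imp]
    exact ⟨⟨le_rfl, hnz.le⟩, fun a ha => ⟨(hnm.trans_le (hall a ha).1).le, (hall a ha).2⟩⟩
  · intro S hS
    have hmin := Finset.min'_mem _ (hne hS)
    obtain ⟨hz, -, hall⟩ := mem_chainsBetween.1 hS
    simp only [Finset.mem_sigma, Finset.mem_filter, Finset.mem_univ, true_and,
      mem_chainsBetween]
    obtain ⟨hmn, hmS⟩ := Finset.mem_erase.1 hmin
    refine ⟨lt_of_le_of_ne (hall _ hmS).1 (Ne.symm hmn), Finset.mem_erase.2 ⟨hnz.ne', hz⟩, hmin,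
      fun a ha => ⟨Finset.min'_le _ a ha, (hall a (Finset.mem_of_mem_erase ha)).2⟩⟩
  · rintro ⟨m, S⟩ hx
    simp only [Finset.mem_sigma, Finset.mem_filter, Finset.mem_univ, true_and,
      mem_chainsBetween] at hx
    obtain ⟨hnm, -, hm, hall⟩ := hx
    have hnS : n ∉ S := fun h => absurd (hall n h).1 (not_le.2 hnm)
    simp only [Finset.erase_insert hnS, Sigma.mk.injEq, heq_eq_eq, and_true]
    exact le_antisymm (Finset.min'_le _ m hm) (Finset.le_min' _ _ _ fun a ha => (hall a ha).1)
  · intro S hS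
    exact Finset.insert_erase (mem_chainsBetween.1 hS).2.1

def chainWeightSum (lam : α → α → ℝ) (n z : α) : ℝ :=
  ∑ S ∈ chainsBetween n z, ∏ q ∈ chainEdges S, lam q.1 q.2

lemma chainWeightSum_of_lt (lam : α → α → ℝ) {n z : α} (h : z < n) :
    chainWeightSum lam n z = 0 := by
  rw [chainWeightSum, chainsBetween_of_lt h, Finset.sum_empty]

lemma chainWeightSum_eq (lam : α → α → ℝ) (n z : α) :
    chainWeightSum lam n z = (if n = z then 1 else 0)
      + ∑ m ∈ univ.filter (fun m => n < m), chainWeightSum lam m z * lam m n := by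
  rcases lt_trichotomy n z with hnz | rfl | hzn
  · rw [if_neg hnz.ne, zero_add, chainWeightSum, sum_chainsBetween_eq_sum_insert hnz]
    refine Finset.sum_congr rfl fun m hm => ?_
    rw [chainWeightSum, Finset.sum_mul]
    refine Finset.sum_congr rfl fun S hS => ?_
    obtain ⟨-, hmS, hall⟩ := mem_chainsBetween.1 hS
    have hnS : (m, n) ∉ chainEdges S := fun h => absurd (hall n (mem_chainEdges.1 h).2.1).1
      (not_le.2 (Finset.mem_filter.1 hm).2)
    rw [chainEdges_insert_of_lt_min hmS (fun a ha => (hall a ha).1) (Finset.mem_filter.1 hm).2,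
      Finset.prod_insert hnS, mul_comm]
  · rw [if_pos rfl, chainWeightSum, chainsBetween_self, Finset.sum_singleton,
      chainEdges_singleton, Finset.prod_empty, left_eq_add]
    exact Finset.sum_eq_zero fun m hm => by
      rw [chainWeightSum_of_lt lam (Finset.mem_filter.1 hm).2, zero_mul]
  · rw [if_neg hzn.ne', chainWeightSum_of_lt lam hzn, zero_add]
    exact (Finset.sum_eq_zero fun m hm => by
      rw [chainWeightSum_of_lt lam (hzn.trans (Finset.mem_filter.1 hm).2), zero_mul]).symm

lemma eq_of_same_downward_recursion {a : α} {c : α → ℝ} {k : α → α → ℝ} {f g : α → ℝ}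
    (hf : ∀ w, a < w → f w = c w + ∑ m ∈ univ.filter (fun m => w < m), f m * k m w)
    (hg : ∀ w, a < w → g w = c w + ∑ m ∈ univ.filter (fun m => w < m), g m * k m w)
    (w : α) (hw : a < w) : f w = g w := by
  induction w using WellFoundedGT.induction with
  | _ w ih =>
    rw [hf w hw, hg w hw]
    congr 1
    refine Finset.sum_congr rfl fun m hm => ?_
    have hwm := (Finset.mem_filter.1 hm).2
    rw [ih m hwm (hw.trans hwm)]

end Chains

variable {N : ℕ}

lemma Tr.sum_prod_eq_prod_sum (g : Fin (N+1) → Fin (N+1) → ℝ) :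
    ∑ T : Tr N, ∏ n ∈ univ.filter (fun n : Fin (N+1) => n ≠ 0), g n (T.1 n)
      = ∏ n ∈ univ.filter (fun n : Fin (N+1) => n ≠ 0),
          ∑ i ∈ univ.filter (fun i => i < n), g n i := by
  let t : Fin (N+1) → Finset (Fin (N+1)) :=
    fun n => if n = 0 then {0} else univ.filter (fun i => i < n)
  have hmem (par : Fin (N+1) → Fin (N+1)) :
      par ∈ Fintype.piFinset t ↔ par 0 = 0 ∧ ∀ n, n ≠ 0 → par n < n := by
    simp only [Fintype.mem_piFinset, t]
    refine ⟨fun h => ⟨by simpa using h 0, fun n hn => by simpa [hn] using h n⟩, ?_⟩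
    rintro ⟨h0, hlt⟩ n
    by_cases hn : n = 0 <;> simp [hn, h0, hlt]
  have hfactor (n : Fin (N+1)) : ∑ j ∈ t n, (if n ≠ 0 then g n j else 1)
      = if n ≠ 0 then ∑ i ∈ univ.filter (fun i => i < n), g n i else 1 := by
    by_cases hn : n = 0 <;> simp [t, hn]
  simp only [Finset.prod_filter]
  refine (Finset.sum_subtype (F := inferInstanceAs (Fintype (Tr N))) _ hmem
    fun par => ∏ n, if n ≠ 0 then g n (par n) else 1).symm.trans ?_
  rw [← Finset.prod_congr rfl fun n _ => hfactor n, Finset.prod_univ_sum]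

lemma prod_ne_zero_eq_prod_mul_prod {D : Finset (Fin (N+1))} (hD : ∀ n ∈ D, n ≠ 0)
    (f : Fin (N+1) → ℝ) :
    ∏ n ∈ univ.filter (fun n : Fin (N+1) => n ≠ 0), f n
      = (∏ n ∈ D, f n) * ∏ n ∈ univ.filter (fun n : Fin (N+1) => n ≠ 0 ∧ n ∉ D), f n := by
  have hcompl : univ.filter (fun n : Fin (N+1) => n ≠ 0 ∧ n ∉ D)
      = univ.filter (fun n : Fin (N+1) => n ≠ 0) \ D := by
    ext n
    simp
  rw [hcompl, mul_comm,
    Finset.prod_sdiff fun n hn => Finset.mem_filter.2 ⟨Finset.mem_univ n, hD n hn⟩]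

section PrescribedEdges

variable {S : Finset (Fin (N+1) × Fin (N+1))} (hlt : ∀ q ∈ S, q.2 < q.1)
  (hfun : ∀ q ∈ S, ∀ q' ∈ S, q.1 = q'.1 → q.2 = q'.2)
include hlt

lemma ne_zero_of_mem_image_fst {n : Fin (N+1)} (hn : n ∈ S.image Prod.fst) : n ≠ 0 := by
  obtain ⟨q, hq, rfl⟩ := Finset.mem_image.1 hn
  exact Fin.ne_zero_of_lt (hlt q hq)

include hfun

lemma Tr.sum_filter_prod_eq_prod_sum (g : Fin (N+1) → Fin (N+1) → ℝ) :
    ∑ T ∈ univ.filter (fun T : Tr N => ∀ q ∈ S, T.1 q.1 = q.2),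
        ∏ n ∈ univ.filter (fun n : Fin (N+1) => n ≠ 0 ∧ n ∉ S.image Prod.fst), g n (T.1 n)
      = ∏ n ∈ univ.filter (fun n : Fin (N+1) => n ≠ 0 ∧ n ∉ S.image Prod.fst),
          ∑ i ∈ univ.filter (fun i => i < n), g n i := by
  set D := S.image Prod.fst
  have hD : ∀ n ∈ D, n ≠ 0 := fun n hn => ne_zero_of_mem_image_fst hlt hn
  -- Prescribed edges are forced by giving them weight one and every other parent weight zero.
  let g' : Fin (N+1) → Fin (N+1) → ℝ := fun n i =>
    if n ∈ D then (if (n, i) ∈ S then 1 else 0) else g n i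
  have hedges (T : Tr N) : (∀ n ∈ D, (n, T.1 n) ∈ S) ↔ ∀ q ∈ S, T.1 q.1 = q.2 := by
    refine ⟨fun h q hq => hfun _ (h q.1 (Finset.mem_image_of_mem _ hq)) q hq rfl, ?_⟩
    intro h n hn
    obtain ⟨q, hq, rfl⟩ := Finset.mem_image.1 hn
    rwa [h q hq]
  have hpoint (T : Tr N) :
      ∏ n ∈ univ.filter (fun n : Fin (N+1) => n ≠ 0), g' n (T.1 n)
        = if ∀ q ∈ S, T.1 q.1 = q.2 then
            ∏ n ∈ univ.filter (fun n : Fin (N+1) => n ≠ 0 ∧ n ∉ D), g n (T.1 n) else 0 := by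
    rw [prod_ne_zero_eq_prod_mul_prod hD, Finset.prod_congr rfl fun n hn => if_pos hn,
      Finset.prod_boole, Finset.prod_congr rfl fun n hn => if_neg (Finset.mem_filter.1 hn).2.2]
    simp only [hedges, ite_mul, one_mul, zero_mul]
  have hforced (n : Fin (N+1)) (hn : n ∈ D) : ∑ i ∈ univ.filter (fun i => i < n), g' n i = 1 := by
    obtain ⟨q, hq, rfl⟩ := Finset.mem_image.1 hn
    have hpar (i : Fin (N+1)) : (q.1, i) ∈ S ↔ i = q.2 :=
      ⟨fun hi => hfun _ hi q hq rfl, fun hi => hi ▸ hq⟩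
    simp only [g', if_pos hn, hpar, Finset.sum_ite_eq', Finset.mem_filter, Finset.mem_univ,
      true_and, if_pos (hlt q hq)]
  rw [Finset.sum_filter, ← Finset.sum_congr rfl fun T _ => hpoint T, Tr.sum_prod_eq_prod_sum,
    prod_ne_zero_eq_prod_mul_prod hD, Finset.prod_congr rfl hforced, Finset.prod_const_one, one_mul]
  exact Finset.prod_congr rfl fun n hn => Finset.sum_congr rfl fun i _ =>
    if_neg (Finset.mem_filter.1 hn).2.2

end PrescribedEdges

lemma probOf_eq_sum_filter (p : Tr N → ℝ) (P : Tr N → Prop) [DecidablePred P] :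
    probOf p P = ∑ T ∈ univ.filter P, p T := by
  unfold probOf
  congr

lemma chainInTree_iff (S : Finset (Fin (N+1))) (T : Tr N) :
    chainInTree S T ↔ ∀ q ∈ chainEdges S, T.1 q.1 = q.2 := by
  constructor
  · rintro h ⟨a, b⟩ hab
    obtain ⟨ha, hb, hba, hmax⟩ := mem_chainEdges.1 hab
    obtain ⟨hpar, hparmax⟩ := h a ha ⟨b, hb, hba⟩
    exact le_antisymm (hmax _ hpar (T.2.2 a (Fin.ne_zero_of_lt hba))) (hparmax b hb hba)
  · rintro h a ha ⟨c, hc, hca⟩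
    have hne : (S.filter (· < a)).Nonempty := ⟨c, Finset.mem_filter.2 ⟨hc, hca⟩⟩
    obtain ⟨hbS, hba⟩ := Finset.mem_filter.1 ((S.filter (· < a)).max'_mem hne)
    have hedge : (a, (S.filter (· < a)).max' hne) ∈ chainEdges S :=
      mem_chainEdges.2 ⟨ha, hbS, hba, fun c hc hca => (S.filter (· < a)).le_max' c
        (Finset.mem_filter.2 ⟨hc, hca⟩)⟩
    rw [h _ hedge]
    exact ⟨hbS, (mem_chainEdges.1 hedge).2.2.2⟩

lemma normBasisF_refl_apply (lam : Fin (N+1) → Fin (N+1) → ℝ) (n w : Fin (N+1)) :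
    normBasisF (Equiv.refl _) lam n w = (if w = n then 1 else 0) - lam n w := by
  simp [normBasisF, indic, eq_comm (a := w)]

namespace LamData

variable {lam : Fin (N+1) → Fin (N+1) → ℝ} (hlam : LamData N lam)
include hlam

lemma sum_lt_eq_one {n : Fin (N+1)} (hn : n ≠ 0) :
    ∑ i ∈ univ.filter (fun i => i < n), lam n i = 1 := by
  rw [← hlam.2.2 n hn, Finset.sum_filter_of_ne fun i _ hi => not_imp_comm.1 (hlam.2.1 n i) hi]

lemma isProb_prodProb : IsProb (prodProb lam) := by
  refine ⟨fun T => Finset.prod_nonneg fun n _ => (hlam.1 n (T.1 n)).1, ?_⟩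
  unfold prodProb
  rw [Tr.sum_prod_eq_prod_sum]
  exact Finset.prod_eq_one fun n hn => hlam.sum_lt_eq_one (Finset.mem_filter.1 hn).2

section PrescribedEdges

variable {S : Finset (Fin (N+1) × Fin (N+1))} (hlt : ∀ q ∈ S, q.2 < q.1)
  (hfun : ∀ q ∈ S, ∀ q' ∈ S, q.1 = q'.1 → q.2 = q'.2)
include hlt hfun

lemma sum_filter_prod_eq_one :
    ∑ T ∈ univ.filter (fun T : Tr N => ∀ q ∈ S, T.1 q.1 = q.2),
        ∏ n ∈ univ.filter (fun n : Fin (N+1) => n ≠ 0 ∧ n ∉ S.image Prod.fst), lam n (T.1 n)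
      = 1 := by
  rw [Tr.sum_filter_prod_eq_prod_sum hlt hfun]
  exact Finset.prod_eq_one fun n hn => hlam.sum_lt_eq_one (Finset.mem_filter.1 hn).2.1

lemma probOf_prodProb_edges_eq_prod :
    probOf (prodProb lam) (fun T => ∀ q ∈ S, T.1 q.1 = q.2) = ∏ q ∈ S, lam q.1 q.2 := by
  have hsplit (T : Tr N) (hT : ∀ q ∈ S, T.1 q.1 = q.2) : prodProb lam T = (∏ q ∈ S, lam q.1 q.2) *
      ∏ n ∈ univ.filter (fun n : Fin (N+1) => n ≠ 0 ∧ n ∉ S.image Prod.fst), lam n (T.1 n) := by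
    rw [prodProb, prod_ne_zero_eq_prod_mul_prod fun n => ne_zero_of_mem_image_fst hlt,
      Finset.prod_image fun q hq q' hq' h => Prod.ext h (hfun q hq q' hq' h)]
    exact congrArg (· * _) (Finset.prod_congr rfl fun q hq => by rw [hT q hq])
  rw [probOf_eq_sum_filter, Finset.sum_congr rfl fun T hT => hsplit T (Finset.mem_filter.1 hT).2,
    ← Finset.mul_sum, hlam.sum_filter_prod_eq_one hlt hfun, mul_one]

end PrescribedEdges

lemma probOf_chainInTree (S : Finset (Fin (N+1))) :
    probOf (prodProb lam) (fun T => chainInTree S T) = ∏ q ∈ chainEdges S, lam q.1 q.2 := by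
  simp only [chainInTree_iff]
  exact hlam.probOf_prodProb_edges_eq_prod (fun _ => lt_of_mem_chainEdges)
    fun _ hq _ hq' => snd_eq_of_mem_chainEdges hq hq'

variable {bstar : Fin (N+1) → (Fin (N+1) → ℝ) → ℝ} (hco : IsCoordF (Equiv.refl _) lam bstar)
include hco

lemma coord_eq_add_sum {μ : Fin (N+1) → ℝ} (hμ : ∑ x, μ x = 0) {w : Fin (N+1)} (hw : w ≠ 0) :
    bstar w μ = μ w + ∑ m ∈ univ.filter (fun m => w < m), bstar m μ * lam m w := by
  have hupper : ∑ n ∈ univ.filter (fun n : Fin (N+1) => n ≠ 0), bstar n μ * lam n w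
      = ∑ m ∈ univ.filter (fun m => w < m), bstar m μ * lam m w := by
    refine (Finset.sum_subset (fun m hm => Finset.mem_filter.2 ⟨Finset.mem_univ m,
      Fin.ne_zero_of_lt (Finset.mem_filter.1 hm).2⟩) fun m _ hm => ?_).symm
    rw [hlam.2.1 m w fun h => hm (Finset.mem_filter.2 ⟨Finset.mem_univ m, h⟩), mul_zero]
  have h := hco μ hμ w
  simp only [normBasisF_refl_apply, mul_sub, mul_ite, mul_one, mul_zero, Finset.sum_sub_distrib,
    Finset.sum_ite_eq, Finset.mem_filter, Finset.mem_univ, true_and, if_pos hw, hupper] at h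
  linarith

lemma coord_mol_eq_chainWeightSum (z : Fin (N+1)) {n : Fin (N+1)} (hn : n ≠ 0) :
    bstar n (mol z 0) = chainWeightSum lam n z := by
  have hmol : ∑ x, mol z 0 x = 0 := by simp [mol, indic, Finset.sum_sub_distrib]
  refine eq_of_same_downward_recursion (a := 0) (c := fun w => if w = z then 1 else 0)
    (f := fun w => bstar w (mol z 0)) (fun w hw => ?_)
    (fun w _ => chainWeightSum_eq lam w z) n (Fin.pos_iff_ne_zero.2 hn)
  rw [hlam.coord_eq_add_sum hco hmol hw.ne']
  simp [mol, indic, hw.ne']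

end LamData

theorem statement6_general (N : ℕ)
    (lam : Fin (N+1) → Fin (N+1) → ℝ) (hlam : LamData N lam)
    (bstar : Fin (N+1) → (Fin (N+1) → ℝ) → ℝ)
    (hco : IsCoordF (Equiv.refl _) lam bstar) :
    IsProb (prodProb lam) ∧
    (∀ S : Finset (Fin (N+1) × Fin (N+1)),
      (∀ q ∈ S, q.2 < q.1) → (∀ q ∈ S, ∀ q' ∈ S, q.1 = q'.1 → q.2 = q'.2) →
      ((∑ T ∈ univ.filter (fun T : Tr N => ∀ q ∈ S, T.1 q.1 = q.2),
          ∏ n ∈ univ.filter (fun n : Fin (N+1) => n ≠ 0 ∧ n ∉ S.image Prod.fst),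
            lam n (T.1 n)) = 1 ∧
        probOf (prodProb lam) (fun T => ∀ q ∈ S, T.1 q.1 = q.2) = ∏ q ∈ S, lam q.1 q.2)) ∧
    (∀ z n : Fin (N+1), z ≠ 0 → n ≠ 0 →
      bstar n (mol z 0) =
        ∑ S ∈ univ.filter (fun S : Finset (Fin (N+1)) =>
            z ∈ S ∧ n ∈ S ∧ ∀ a ∈ S, n ≤ a ∧ a ≤ z),
          probOf (prodProb lam) (fun T => chainInTree S T)) := by
  refine ⟨hlam.isProb_prodProb, fun S hlt hfun => ⟨hlam.sum_filter_prod_eq_one hlt hfun,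
    hlam.probOf_prodProb_edges_eq_prod hlt hfun⟩, fun z n _ hn => ?_⟩
  simp only [hlam.probOf_chainInTree]
  rw [hlam.coord_mol_eq_chainWeightSum hco z hn, chainWeightSum]
  exact Finset.sum_congr (by ext; simp [mem_chainsBetween]) fun _ _ => rfl

theorem statement6 (N : ℕ) (d : Fin (N+1) → Fin (N+1) → ℝ) (hd : IsMetric d)
    (lam : Fin (N+1) → Fin (N+1) → ℝ) (hlam : LamData N lam)
    (bstar : Fin (N+1) → (Fin (N+1) → ℝ) → ℝ)
    (hco : IsCoordF (Equiv.refl _) lam bstar) :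
    IsProb (prodProb lam) ∧
    (∀ S : Finset (Fin (N+1) × Fin (N+1)),
      (∀ q ∈ S, q.2 < q.1) → (∀ q ∈ S, ∀ q' ∈ S, q.1 = q'.1 → q.2 = q'.2) →
      ((∑ T ∈ univ.filter (fun T : Tr N => ∀ q ∈ S, T.1 q.1 = q.2),
          ∏ n ∈ univ.filter (fun n : Fin (N+1) => n ≠ 0 ∧ n ∉ S.image Prod.fst),
            lam n (T.1 n)) = 1 ∧
        probOf (prodProb lam) (fun T => ∀ q ∈ S, T.1 q.1 = q.2) = ∏ q ∈ S, lam q.1 q.2)) ∧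
    (∀ z n : Fin (N+1), z ≠ 0 → n ≠ 0 →
      bstar n (mol z 0) =
        ∑ S ∈ univ.filter (fun S : Finset (Fin (N+1)) =>
            z ∈ S ∧ n ∈ S ∧ ∀ a ∈ S, n ≤ a ∧ a ≤ z),
          probOf (prodProb lam) (fun T => chainInTree S T)) :=
  statement6_general N lam hlam bstar hco

end TCS
end
end

section
/- Let (M,d) be a finite metric space with N+1 points, {x,y} a pair of distinct points of M, and (b_n) ∈ B(M). If p ∈ [π_{(b_n)}]_{x,y}, then Σ_{n=1}^N |b*_n(δ_x − δ_y)| ‖b_n‖ ≤ E_p( d_T(x,y) ). -/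
open Finset

noncomputable section
open scoped Classical

/-!
The heart of the proof is the formula `b*_n(δ_x - δ_y) = p(n ∈ [x, m)) - p(n ∈ [y, m))`, where
`m = m_T(x, y)`. Compatibility and `(x, y)`-independence turn `p(n ∈ [z, m)) λ_{n,t}` into
`p({n, t} ∈ T, n ∈ [z, m))`; summing over the children `n` of `t` leaves `p(t ∈ (z, m])`, and
`1_{[z,m)} - 1_{(z,m]} = δ_z - δ_m`, so the right-hand side solves the triangular system that
determines the coordinates. With `‖b_n‖ ≤ Σ_t λ_{n,t} d(n, t)`, the same independence bounds
`|b*_n(δ_x - δ_y)| λ_{n,t}` by the probability that `{n, t}` is an edge of `[x, y]_T`, and summing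
`d(n, t)` against these probabilities gives `E_p(d_T(x, y))`.
-/

namespace TCS

variable {N : ℕ}

lemma IsMetric.nonneg {V : Type*} {d : V → V → ℝ} (hd : IsMetric d) (a b : V) : 0 ≤ d a b := by
  have h := hd.2.2 a b a
  rw [(hd.2.1 a a).2 rfl, hd.1 b a] at h
  linarith

section Tree

variable {T : Tr N} {a b z m s s' : Fin (N+1)}

lemma parent_lt (T : Tr N) (h : a ≠ 0) : T.1 a < a := T.2.2 a h

@[simp]
lemma anc_refl (T : Tr N) (a : Fin (N+1)) : Anc T a a := Relation.ReflTransGen.refl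

lemma Anc.le (h : Anc T a b) : b ≤ a := by
  induction h with
  | refl => exact le_rfl
  | tail _ h ih =>
    obtain ⟨rfl, hu⟩ := h
    exact (parent_lt T hu).le.trans ih

lemma Anc.parent_of_ne (h : Anc T a b) (hab : a ≠ b) : a ≠ 0 ∧ Anc T (T.1 a) b := by
  rcases h.cases_head with h | ⟨c, ⟨rfl, ha⟩, hc⟩
  · exact absurd h hab
  · exact ⟨ha, hc⟩

lemma anc_zero (T : Tr N) (a : Fin (N+1)) : Anc T a 0 := by
  induction a using WellFoundedLT.induction with
  | ind a ih =>
    by_cases ha : a = 0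
    · exact ha ▸ Relation.ReflTransGen.refl
    · exact Relation.ReflTransGen.head ⟨rfl, ha⟩ (ih _ (parent_lt T ha))

lemma eq_zero_of_anc_zero (h : Anc T 0 a) : a = 0 := by
  by_contra ha
  exact (h.parent_of_ne (Ne.symm ha)).1 rfl

lemma anc_total (ha : Anc T z a) (hb : Anc T z b) : Anc T a b ∨ Anc T b a := by
  induction ha with
  | refl => exact Or.inl hb
  | tail _ h2 ih =>
    rcases ih with h | h
    · rcases h.cases_head with h' | ⟨c, hc1, hc2⟩
      · exact Or.inr (h' ▸ Relation.ReflTransGen.single h2)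
      · obtain ⟨rfl, -⟩ := hc1
        obtain ⟨rfl, -⟩ := h2
        exact Or.inl hc2
    · exact Or.inr (h.tail h2)

lemma eq_of_parent_eq (hs : Anc T z s) (hs' : Anc T z s') (hs0 : s ≠ 0) (hs'0 : s' ≠ 0)
    (h : T.1 s = T.1 s') : s = s' := by
  have key : ∀ {u w}, w ≠ 0 → T.1 u = T.1 w → Anc T u w → u = w := by
    intro u w hw huw hanc
    by_contra hne
    have hle := (hanc.parent_of_ne hne).2.le
    rw [huw] at hle
    exact hle.not_gt (parent_lt T hw)
  rcases anc_total hs hs' with h' | h'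
  · exact key hs'0 h h'
  · exact (key hs0 h.symm h').symm

lemma anc_meet (T : Tr N) (x y : Fin (N+1)) :
    Anc T x (meet T x y) ∧ Anc T y (meet T x y) := by
  have h0 : (0 : Fin (N+1)) ∈ univ.filter (fun a => Anc T x a ∧ Anc T y a) := by
    simp [anc_zero]
  obtain ⟨b, hb⟩ := Finset.max_of_mem h0
  have hmem := Finset.mem_of_max hb
  simp only [mem_filter, mem_univ, true_and] at hmem
  rw [meet, hb, WithBot.unbotD_coe]
  exact hmem

lemma onHalfSeg.ne_zero (h : onHalfSeg T z m s) : s ≠ 0 := by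
  rintro rfl
  exact h.2.2 (eq_zero_of_anc_zero h.2.1).symm

def onSegIoc (T : Tr N) (z m s : Fin (N+1)) : Prop :=
  Anc T z s ∧ Anc T s m ∧ s ≠ z

lemma indicator_onHalfSeg_sub_onSegIoc (h : Anc T z m) (v : Fin (N+1)) :
    ((if onHalfSeg T z m v then 1 else 0) - (if onSegIoc T z m v then 1 else 0) : ℝ)
      = indic z v - indic m v := by
  unfold onHalfSeg onSegIoc indic
  by_cases hz : v = z <;> by_cases hm : v = m
  · subst hz hm; simp
  · subst hz; simp [hm, h]
  · subst hm; simp [hz, h]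
  · simp [hz, hm]

/-- The only such `s` is the predecessor of `v` on the path from `z`. -/
lemma sum_parent_eq_onHalfSeg (T : Tr N) (z m v : Fin (N+1)) :
    ∑ s, (if T.1 s = v ∧ onHalfSeg T z m s then (1 : ℝ) else 0)
      = if onSegIoc T z m v then 1 else 0 := by
  split_ifs with hv
  · obtain ⟨hzv, hvm, hvz⟩ := hv
    obtain ⟨c, hzc, rfl, hc0⟩ : ∃ c, Anc T z c ∧ v = T.1 c ∧ c ≠ 0 := by
      rcases hzv.cases_tail with h | ⟨c, hzc, hcv⟩
      · exact absurd h hvz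
      · exact ⟨c, hzc, hcv⟩
    have hcm : c ≠ m := fun h => (hvm.le.trans_lt (parent_lt T hc0)).ne' h
    have hcm' : Anc T c m := Relation.ReflTransGen.head ⟨rfl, hc0⟩ hvm
    rw [Finset.sum_eq_single c]
    · simp [onHalfSeg, hzc, hcm, hcm']
    · rintro s - hsc
      rw [if_neg]
      rintro ⟨hpar, hseg⟩
      exact hsc (eq_of_parent_eq hseg.1 hzc hseg.ne_zero hc0 hpar)
    · simp
  · refine Finset.sum_eq_zero fun s _ => if_neg ?_
    rintro ⟨rfl, hzs, hsm, hsne⟩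
    have hs0 := (hsm.parent_of_ne hsne).1
    exact hv ⟨hzs.tail ⟨rfl, hs0⟩, (hsm.parent_of_ne hsne).2,
      fun h => (hzs.le.trans_lt (h ▸ parent_lt T hs0)).false⟩

/-- The edge `{s, par s}` of `T` lies on the path `[x, y]_T`. -/
def onPath (T : Tr N) (x y s : Fin (N+1)) : Prop :=
  onHalfSeg T x (meet T x y) s ∨ onHalfSeg T y (meet T x y) s

lemma treeDist_eq_sum (d : Fin (N+1) → Fin (N+1) → ℝ) (T : Tr N) (x y : Fin (N+1)) :
    treeDist d T x y = ∑ s, if onPath T x y s then d s (T.1 s) else 0 := by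
  rw [treeDist, Finset.sum_filter]
  congr! 2 with s
  simp only [onPath, onHalfSeg, or_and_right]

end Tree

section Probability

variable {p : Tr N → ℝ}

lemma probOf_nonneg (hp : ∀ T, 0 ≤ p T) (P : Tr N → Prop) : 0 ≤ probOf p P :=
  Finset.sum_nonneg fun T _ => hp T

lemma probOf_mono (hp : ∀ T, 0 ≤ p T) {P Q : Tr N → Prop} (h : ∀ T, P T → Q T) :
    probOf p P ≤ probOf p Q :=
  Finset.sum_le_sum_of_subset_of_nonneg (Finset.monotone_filter_right _ fun T _ => h T)
    fun T _ _ => hp T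

lemma probOf_eq_zero {P : Tr N → Prop} (h : ∀ T, ¬ P T) : probOf p P = 0 :=
  Finset.sum_eq_zero fun T hT => absurd (Finset.mem_filter.1 hT).2 (h T)

lemma probOf_congr {P Q : Tr N → Prop} (h : ∀ T, P T ↔ Q T) : probOf p P = probOf p Q := by
  obtain rfl : P = Q := funext fun T => propext (h T)
  rfl

lemma probOf_eq_sum_mul (p : Tr N → ℝ) (P : Tr N → Prop) :
    probOf p P = ∑ T, p T * if P T then 1 else 0 := by
  simp [probOf, Finset.sum_filter]

lemma sum_mul_probOf_parent_eq (p : Tr N → ℝ) (w : Fin (N+1) → Fin (N+1) → ℝ)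
    (C : Fin (N+1) → Tr N → Prop) :
    ∑ s, ∑ t, w s t * probOf p (fun T => T.1 s = t ∧ C s T)
      = expval p (fun T => ∑ s, if C s T then w s (T.1 s) else 0) := by
  simp only [expval, probOf_eq_sum_mul, Finset.mul_sum]
  conv_rhs => rw [Finset.sum_comm]
  refine Finset.sum_congr rfl fun s _ => ?_
  rw [Finset.sum_comm]
  refine Finset.sum_congr rfl fun T _ => ?_
  simp [ite_and, mul_comm]

end Probability

section ProductProbability

variable {lam : Fin (N+1) → Fin (N+1) → ℝ}

lemma probOf_prodProb_parent_mem (A : Fin (N+1) → Finset (Fin (N+1))) (hA0 : A 0 = {0})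
    (hA : ∀ m, m ≠ 0 → A m ⊆ univ.filter (· < m)) :
    probOf (prodProb lam) (fun T => ∀ m, T.1 m ∈ A m)
      = ∏ m ∈ univ.filter (· ≠ 0), ∑ j ∈ A m, lam m j := by
  set g : Fin (N+1) → Fin (N+1) → ℝ := fun m j => if m = 0 then 1 else lam m j
  have hprod : ∀ T : Tr N, prodProb lam T = ∏ m, g m (T.1 m) := by
    intro T
    rw [prodProb, Finset.prod_filter]
    exact Finset.prod_congr rfl fun m _ => by by_cases hm : m = 0 <;> simp [g, hm]
  have htree : ∀ f ∈ Fintype.piFinset A, f 0 = 0 ∧ ∀ m, m ≠ 0 → f m < m := by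
    intro f hf
    rw [Fintype.mem_piFinset] at hf
    refine ⟨by simpa [hA0] using hf 0, fun m hm => ?_⟩
    simpa using hA m hm (hf m)
  have hsurj : ∀ f ∈ Fintype.piFinset A, ∃ T : Tr N, (∀ m, T.1 m ∈ A m) ∧ T.1 = f :=
    fun f hf => ⟨⟨f, htree f hf⟩, Fintype.mem_piFinset.1 hf, rfl⟩
  calc probOf (prodProb lam) (fun T => ∀ m, T.1 m ∈ A m)
      = ∑ f ∈ Fintype.piFinset A, ∏ m, g m (f m) := by
        refine Finset.sum_bij (fun T _ => T.1)
          (fun T hT => by simpa [Fintype.mem_piFinset] using hT) (fun _ _ _ _ => Subtype.ext)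
          (fun f hf => by
            obtain ⟨T, hT, rfl⟩ := hsurj f hf
            exact ⟨T, by simpa using hT, rfl⟩)
          (fun T _ => hprod T)
    _ = ∏ m, ∑ j ∈ A m, g m j := (Finset.prod_univ_sum A g).symm
    _ = ∏ m ∈ univ.filter (· ≠ 0), ∑ j ∈ A m, lam m j := by
        rw [Finset.prod_filter]
        exact Finset.prod_congr rfl fun m _ => by by_cases hm : m = 0 <;> simp [g, hm, hA0]

lemma probOf_prodProb_parent_eq (hlam : LamData N lam) {n t : Fin (N+1)} (ht : t < n) :
    probOf (prodProb lam) (fun T => T.1 n = t) = lam n t := by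
  have hn : n ≠ 0 := Fin.pos_iff_ne_zero.1 (lt_of_le_of_lt (Fin.zero_le t) ht)
  set A : Fin (N+1) → Finset (Fin (N+1)) :=
    fun m => if m = n then {t} else if m = 0 then {0} else univ.filter (· < m)
  have hevent : ∀ T : Tr N, T.1 n = t ↔ ∀ m, T.1 m ∈ A m := by
    refine fun T => ⟨fun h m => ?_, fun h => by simpa [A] using h n⟩
    by_cases hmn : m = n
    · simp [A, hmn, h]
    by_cases hm : m = 0
    · subst hm; simp [A, hn.symm, T.2.1]
    · simp [A, hmn, hm, parent_lt T hm]
  have hrow : ∀ m ∈ univ.filter (· ≠ (0 : Fin (N+1))),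
      ∑ j ∈ A m, lam m j = if m = n then lam n t else 1 := by
    intro m hm
    have hm : m ≠ 0 := (Finset.mem_filter.1 hm).2
    by_cases hmn : m = n
    · simp [A, hmn]
    · simp only [A, if_neg hmn, if_neg hm]
      rw [Finset.sum_filter_of_ne fun j _ hj => not_not.1 fun hc => hj (hlam.2.1 m j hc),
        hlam.2.2 m hm]
  rw [probOf_congr hevent, probOf_prodProb_parent_mem A (by simp [A, hn.symm])
      (fun m hm => by by_cases hmn : m = n <;> simp [A, hmn, hm, ht]),
    Finset.prod_congr rfl hrow, Finset.prod_ite_eq' _ n, if_pos (by simpa using hn)]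

end ProductProbability

section Coefficients

variable {lam : Fin (N+1) → Fin (N+1) → ℝ}

lemma normBasis_apply (n v : Fin (N+1)) :
    normBasis lam n v = indic n v - lam n v := by
  show (if v = n then 1 else 0) - ∑ i, lam n i * (if v = i then 1 else 0) = _
  simp [indic]

lemma sum_mul_normBasis (S : Finset (Fin (N+1))) (c : Fin (N+1) → ℝ) (v : Fin (N+1)) :
    ∑ n ∈ S, c n * normBasis lam n v = (if v ∈ S then c v else 0) - ∑ n ∈ S, c n * lam n v := by
  simp [normBasis_apply, mul_sub, indic, Finset.sum_sub_distrib]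

/-- The system is triangular (`λ_{n,i} = 0` unless `i < n`): downward induction on `n`. -/
lemma eq_of_sum_mul_normBasis_eq (hlow : ∀ n i : Fin (N+1), ¬ i < n → lam n i = 0)
    {c c' : Fin (N+1) → ℝ}
    (h : ∀ v, v ≠ 0 → ∑ n ∈ univ.filter (· ≠ 0), c n * normBasis lam n v
      = ∑ n ∈ univ.filter (· ≠ 0), c' n * normBasis lam n v) :
    ∀ n, n ≠ 0 → c n = c' n := by
  have hrec : ∀ v, v ≠ 0 → c v - c' v = ∑ n ∈ univ.filter (· ≠ 0), (c n - c' n) * lam n v := by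
    intro v hv
    have hv' := h v hv
    rw [sum_mul_normBasis, sum_mul_normBasis, if_pos (by simpa using hv),
      if_pos (by simpa using hv)] at hv'
    simp only [sub_mul, Finset.sum_sub_distrib]
    linarith
  intro v
  induction v using WellFoundedGT.induction with
  | ind v ih =>
    intro hv
    rw [← sub_eq_zero, hrec v hv]
    refine Finset.sum_eq_zero fun n hn => ?_
    by_cases hvn : v < n
    · rw [ih n hvn (Finset.mem_filter.1 hn).2, sub_self, zero_mul]
    · rw [hlow n v hvn, mul_zero]

variable {p : Tr N → ℝ} {x y : Fin (N+1)}

def segCoeff (p : Tr N → ℝ) (x y n : Fin (N+1)) : ℝ :=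
  probOf p (fun T => onHalfSeg T x (meet T x y) n) - probOf p (fun T => onHalfSeg T y (meet T x y) n)

lemma segCoeff_zero (p : Tr N → ℝ) (x y : Fin (N+1)) : segCoeff p x y 0 = 0 := by
  rw [segCoeff, probOf_eq_zero fun T h => h.ne_zero rfl, probOf_eq_zero fun T h => h.ne_zero rfl,
    sub_self]

lemma segCoeff_mul_lam (hlam : LamData N lam) (hcomp : Compat (prodProb lam) p)
    (hind : XYIndep p x y) (n t : Fin (N+1)) :
    segCoeff p x y n * lam n t
      = probOf p (fun T => T.1 n = t ∧ onHalfSeg T x (meet T x y) n)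
        - probOf p (fun T => T.1 n = t ∧ onHalfSeg T y (meet T x y) n) := by
  by_cases htn : t < n
  · rw [segCoeff, hind x (Or.inl rfl) n t htn, hind y (Or.inr rfl) n t htn,
      ← hcomp n t htn, probOf_prodProb_parent_eq hlam htn]
    ring
  · have hempty : ∀ z (T : Tr N), ¬ (T.1 n = t ∧ onHalfSeg T z (meet T x y) n) := by
      rintro z T ⟨rfl, hseg⟩
      exact htn (parent_lt T hseg.ne_zero)
    rw [hlam.2.1 n t htn, mul_zero, probOf_eq_zero (hempty x), probOf_eq_zero (hempty y), sub_zero]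

lemma sum_probOf_parent_eq_onHalfSeg (p : Tr N → ℝ) (m : Tr N → Fin (N+1)) (z v : Fin (N+1)) :
    ∑ n, probOf p (fun T => T.1 n = v ∧ onHalfSeg T z (m T) n)
      = probOf p (fun T => onSegIoc T z (m T) v) := by
  simp only [probOf_eq_sum_mul]
  rw [Finset.sum_comm]
  exact Finset.sum_congr rfl fun T _ => by
    rw [← Finset.mul_sum]
    convert congrArg (p T * ·) (sum_parent_eq_onHalfSeg T z (m T) v)

lemma sum_segCoeff_mul_normBasis (hlam : LamData N lam) (hp : IsProb p)
    (hcomp : Compat (prodProb lam) p) (hind : XYIndep p x y) (v : Fin (N+1)) :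
    ∑ n, segCoeff p x y n * normBasis lam n v = mol x y v := by
  calc ∑ n, segCoeff p x y n * normBasis lam n v
      = segCoeff p x y v - ∑ n, segCoeff p x y n * lam n v := by
        simp [sum_mul_normBasis]
    _ = segCoeff p x y v - (probOf p (fun T => onSegIoc T x (meet T x y) v)
          - probOf p (fun T => onSegIoc T y (meet T x y) v)) := by
        simp only [segCoeff_mul_lam hlam hcomp hind, Finset.sum_sub_distrib,
          sum_probOf_parent_eq_onHalfSeg p (fun T => meet T x y)]
    _ = ∑ T, p T * mol x y v := by
        simp only [segCoeff, probOf_eq_sum_mul, ← Finset.sum_sub_distrib, ← mul_sub]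
        refine Finset.sum_congr rfl fun T _ => ?_
        rw [sub_sub_sub_comm, indicator_onHalfSeg_sub_onSegIoc (anc_meet T x y).1,
          indicator_onHalfSeg_sub_onSegIoc (anc_meet T x y).2, mol]
        ring
    _ = mol x y v := by rw [← Finset.sum_mul, hp.2, one_mul]

lemma bstar_mol_eq_segCoeff (hlam : LamData N lam)
    {bstar : Fin (N+1) → (Fin (N+1) → ℝ) → ℝ} (hco : IsCoordF (Equiv.refl _) lam bstar)
    (hp : IsProb p) (hcomp : Compat (prodProb lam) p) (hind : XYIndep p x y)
    {n : Fin (N+1)} (hn : n ≠ 0) :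
    bstar n (mol x y) = segCoeff p x y n := by
  refine eq_of_sum_mul_normBasis_eq (c := fun n => bstar n (mol x y)) (c' := segCoeff p x y)
    hlam.2.1 (fun v _ => ?_) n hn
  have hmol : ∑ v, mol x y v = 0 := by simp [mol, indic, Finset.sum_sub_distrib]
  have hfilter : ∑ n ∈ univ.filter (· ≠ 0), segCoeff p x y n * normBasis lam n v
      = ∑ n, segCoeff p x y n * normBasis lam n v :=
    Finset.sum_filter_of_ne fun n _ hne hn0 => hne (by rw [hn0, segCoeff_zero, zero_mul])
  rw [hfilter, sum_segCoeff_mul_normBasis hlam hp hcomp hind]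
  exact (hco (mol x y) hmol v).symm

end Coefficients

lemma tcNorm_normBasis_le {d lam : Fin (N+1) → Fin (N+1) → ℝ} (hd : ∀ a b, 0 ≤ d a b)
    (hlam : LamData N lam) {n : Fin (N+1)} (hn : n ≠ 0) :
    tcNorm d 0 (normBasis lam n) ≤ ∑ t, lam n t * d n t := by
  refine Real.sSup_le ?_ (Finset.sum_nonneg fun t _ => mul_nonneg (hlam.1 n t).1 (hd n t))
  rintro _ ⟨f, -, hlip, rfl⟩
  calc ∑ v, normBasis lam n v * f v = ∑ v, lam n v * (f n - f v) := by
        simp [normBasis_apply, sub_mul, mul_sub, Finset.sum_sub_distrib, indic,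
          ← Finset.sum_mul, hlam.2.2 n hn]
    _ ≤ ∑ t, lam n t * d n t := Finset.sum_le_sum fun t _ =>
        mul_le_mul_of_nonneg_left ((le_abs_self _).trans (hlip n t)) (hlam.1 n t).1

section Bound

variable {lam : Fin (N+1) → Fin (N+1) → ℝ} {p : Tr N → ℝ} {x y : Fin (N+1)}

lemma abs_segCoeff_mul_lam_le (hlam : LamData N lam) (hp : ∀ T, 0 ≤ p T)
    (hcomp : Compat (prodProb lam) p) (hind : XYIndep p x y) (n t : Fin (N+1)) :
    |segCoeff p x y n| * lam n t ≤ probOf p (fun T => T.1 n = t ∧ onPath T x y n) := by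
  rw [← abs_of_nonneg (hlam.1 n t).1, ← abs_mul, segCoeff_mul_lam hlam hcomp hind]
  exact abs_sub_le_of_nonneg_of_le (probOf_nonneg hp _)
    (probOf_mono hp fun T h => ⟨h.1, Or.inl h.2⟩) (probOf_nonneg hp _)
    (probOf_mono hp fun T h => ⟨h.1, Or.inr h.2⟩)

lemma abs_segCoeff_mul_tcNorm_le {d : Fin (N+1) → Fin (N+1) → ℝ} (hd : ∀ a b, 0 ≤ d a b)
    (hlam : LamData N lam) (hp : ∀ T, 0 ≤ p T) (hcomp : Compat (prodProb lam) p)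
    (hind : XYIndep p x y) {n : Fin (N+1)} (hn : n ≠ 0) :
    |segCoeff p x y n| * tcNorm d 0 (normBasis lam n)
      ≤ ∑ t, d n t * probOf p (fun T => T.1 n = t ∧ onPath T x y n) :=
  calc |segCoeff p x y n| * tcNorm d 0 (normBasis lam n)
      ≤ |segCoeff p x y n| * ∑ t, lam n t * d n t :=
        mul_le_mul_of_nonneg_left (tcNorm_normBasis_le hd hlam hn) (abs_nonneg _)
    _ = ∑ t, d n t * (|segCoeff p x y n| * lam n t) := by
        rw [Finset.mul_sum]
        exact Finset.sum_congr rfl fun t _ => by ring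
    _ ≤ _ := Finset.sum_le_sum fun t _ =>
        mul_le_mul_of_nonneg_left (abs_segCoeff_mul_lam_le hlam hp hcomp hind n t) (hd n t)

end Bound

theorem statement8_general (N : ℕ) (d : Fin (N+1) → Fin (N+1) → ℝ) (hd : IsMetric d)
    (lam : Fin (N+1) → Fin (N+1) → ℝ) (hlam : LamData N lam)
    (bstar : Fin (N+1) → (Fin (N+1) → ℝ) → ℝ)
    (hco : IsCoordF (Equiv.refl _) lam bstar)
    (x y : Fin (N+1))
    (p : Tr N → ℝ) (hp : IsProb p) (hcomp : Compat (prodProb lam) p)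
    (hind : XYIndep p x y) :
    ∑ n ∈ univ.filter (· ≠ (0 : Fin (N+1))),
        |bstar n (mol x y)| * tcNorm d 0 (normBasis lam n)
      ≤ expval p (fun T => treeDist d T x y) := by
  have hd0 : ∀ a b, 0 ≤ d a b := hd.nonneg
  calc ∑ n ∈ univ.filter (· ≠ (0 : Fin (N+1))),
        |bstar n (mol x y)| * tcNorm d 0 (normBasis lam n)
      ≤ ∑ n ∈ univ.filter (· ≠ (0 : Fin (N+1))),
          ∑ t, d n t * probOf p (fun T => T.1 n = t ∧ onPath T x y n) := by
        refine Finset.sum_le_sum fun n hn => ?_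
        have hn : n ≠ 0 := (Finset.mem_filter.1 hn).2
        rw [bstar_mol_eq_segCoeff hlam hco hp hcomp hind hn]
        exact abs_segCoeff_mul_tcNorm_le hd0 hlam hp.1 hcomp hind hn
    _ ≤ ∑ n, ∑ t, d n t * probOf p (fun T => T.1 n = t ∧ onPath T x y n) :=
        Finset.sum_le_sum_of_subset_of_nonneg (Finset.filter_subset _ _) fun n _ _ =>
          Finset.sum_nonneg fun t _ => mul_nonneg (hd0 n t) (probOf_nonneg hp.1 _)
    _ = expval p (fun T => treeDist d T x y) := by
        simp only [sum_mul_probOf_parent_eq, treeDist_eq_sum]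

theorem statement8 (N : ℕ) (d : Fin (N+1) → Fin (N+1) → ℝ) (hd : IsMetric d)
    (lam : Fin (N+1) → Fin (N+1) → ℝ) (hlam : LamData N lam)
    (bstar : Fin (N+1) → (Fin (N+1) → ℝ) → ℝ)
    (hco : IsCoordF (Equiv.refl _) lam bstar)
    (x y : Fin (N+1)) (hxy : x ≠ y)
    (p : Tr N → ℝ) (hp : IsProb p) (hcomp : Compat (prodProb lam) p)
    (hind : XYIndep p x y) :
    ∑ n ∈ univ.filter (· ≠ (0 : Fin (N+1))),
        |bstar n (mol x y)| * tcNorm d 0 (normBasis lam n)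
      ≤ expval p (fun T => treeDist d T x y) :=
  statement8_general N d hd lam hlam bstar hco x y p hp hcomp hind

end TCS
end
end
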